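/- arXiv:1311.7544 — 5 statements merged into one kernel-verified Lean document; each statement's English description precedes it below -/
import Mathlib

section
/- Let E be a measurable space, φ : E^k → ℝ bounded measurable, and for N ≥ k let φ̃ denote the symmetrization of φ ⊗ 1^{⊗(N-k)} over all permutations of N coordinates. For V ∈ E^N let μ^N_V = (1/N) Σᵢ δ_{vᵢ} be the empirical measure and R_φ(μ^N_V) = ∫_{E^k} φ d(μ^N_V)^{⊗k}. Then ‖φ̃ - R_φ ∘ μ^N_·‖_{L^∞(E^N)} ≤ (2k²/N) ‖φ‖_{L^∞(E^k)}. -/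
/-!
Since `Perm (Fin N)` acts transitively on the embeddings `Fin k ↪ Fin N`, averaging over
permutations is the same as averaging over injective index tuples `ι : Fin k → Fin N`. These make
up a proportion `N.descFactorial k / N ^ k ≥ 1 - k (k - 1) / N` of all tuples, and an average of a
function bounded by `C` moves by at most `2 C` times the proportion of points left out.
-/

open scoped BigOperators
open Finset

namespace MulAction

theorem expect_smul_eq_expect {G X M : Type*} [Group G] [Fintype G] [MulAction G X] [Fintype X]
    [IsPretransitive G X] [AddCommMonoid M] [Module ℚ≥0 M] (f : X → M) (b : X) :
    𝔼 g : G, f (g • b) = 𝔼 x : X, f x := by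
  have : Nonempty X := ⟨b⟩
  have h_indep : ∀ y : X, 𝔼 g : G, f (g • y) = 𝔼 g : G, f (g • b) := by
    intro y
    obtain ⟨h, rfl⟩ := exists_smul_eq G b y
    exact Fintype.expect_equiv (Equiv.mulRight h) _ _ fun g => by simp [mul_smul]
  calc 𝔼 g : G, f (g • b) = 𝔼 y : X, 𝔼 g : G, f (g • y) := by
        simp only [h_indep, Fintype.expect_const]
    _ = 𝔼 g : G, 𝔼 y : X, f (g • y) := expect_comm _ _ _
    _ = 𝔼 x : X, f x := by
      simp only [fun g : G => Fintype.expect_equiv (toPerm g) (fun y => f (g • y)) f fun _ => rfl,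
        Fintype.expect_const]

end MulAction

theorem Finset.abs_expect_sub_expect_le {ι : Type*} {s t : Finset ι} (hst : s ⊆ t)
    (hs : s.Nonempty) {f : ι → ℝ} {C : ℝ} (hC : ∀ i ∈ t, |f i| ≤ C) :
    |𝔼 i ∈ s, f i - 𝔼 i ∈ t, f i| ≤ 2 * (1 - #s / #t) * C := by
  classical
  obtain ⟨i₀, hi₀⟩ := hs
  have hC₀ : 0 ≤ C := (abs_nonneg _).trans (hC i₀ (hst hi₀))
  have h_bound : ∀ u ⊆ t, |𝔼 i ∈ u, f i| ≤ C := fun u hu => by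
    refine (abs_expect_le _ _).trans ?_
    rcases u.eq_empty_or_nonempty with rfl | hu₀
    · simpa using hC₀
    · exact expect_le hu₀ fun i hi => hC i (hu hi)
  have hs₀ : (0 : ℝ) < #s := by exact_mod_cast card_pos.2 ⟨i₀, hi₀⟩
  have h_card : (#t : ℝ) = #s + #(t \ s) := by
    rw [← card_sdiff_add_card_eq_card hst]; push_cast; ring
  -- `𝔼_t` is the convex combination of `𝔼_s` and `𝔼_{t \ s}` with weights `#s / #t`, `#(t \ s) / #t`.
  have h_diff : 𝔼 i ∈ s, f i - 𝔼 i ∈ t, f i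
      = (1 - #s / #t) * (𝔼 i ∈ s, f i - 𝔼 i ∈ t \ s, f i) := by
    rw [expect_eq_sum_div_card t, ← sum_sdiff hst, ← card_smul_expect s,
      ← card_smul_expect (t \ s), nsmul_eq_mul, nsmul_eq_mul, h_card]
    field_simp
    ring
  have h_weight : 0 ≤ 1 - (#s / #t : ℝ) := by
    rw [sub_nonneg, div_le_one (by rw [h_card]; positivity)]
    exact_mod_cast card_le_card hst
  rw [h_diff, abs_mul, abs_of_nonneg h_weight, mul_assoc, mul_left_comm, two_mul]
  gcongr
  exact (abs_sub _ _).trans (add_le_add (h_bound s hst) (h_bound _ sdiff_subset))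

theorem Nat.one_sub_descFactorial_div_pow_le {N k : ℕ} (hkN : k ≤ N) :
    1 - (N.descFactorial k : ℝ) / N ^ k ≤ k * (k - 1) / N := by
  rcases N.eq_zero_or_pos with rfl | hN
  · obtain rfl : k = 0 := by omega
    simp
  have hN' : (0 : ℝ) < N := by exact_mod_cast hN
  have hkN' : (k : ℝ) ≤ N := by exact_mod_cast hkN
  -- Bernoulli's inequality for `(N + 1 - k) / N = 1 - (k - 1) / N`,
  -- combined with `(N + 1 - k) ^ k ≤ N.descFactorial k`.
  have h_bernoulli := one_add_mul_le_pow (a := -((k - 1) / N : ℝ)) (n := k) (by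
    have : (k - 1 : ℝ) / N ≤ 1 := (div_le_one hN').2 (by linarith)
    linarith)
  have h_lower : ((N + 1 - k : ℕ) : ℝ) ^ k ≤ N.descFactorial k := by
    exact_mod_cast Nat.pow_sub_le_descFactorial N k
  have h_base : (1 : ℝ) + -((k - 1) / N) = (N + 1 - k : ℕ) / N := by
    rw [Nat.cast_sub (by omega)]; push_cast; field_simp; ring
  rw [h_base, div_pow] at h_bernoulli
  have := h_bernoulli.trans (div_le_div_of_nonneg_right h_lower (by positivity))
  linarith [show (k : ℝ) * -((k - 1) / N) = -(k * (k - 1) / N) by ring]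

theorem grunbaum_symmetrization_estimate_general
    {E : Type*} {k N : ℕ} (hkN : k ≤ N)
    (φ : (Fin k → E) → ℝ)
    (C : ℝ) (hC : ∀ x, |φ x| ≤ C)
    (V : Fin N → E) :
    |((N.factorial : ℝ))⁻¹
        * ∑ σ : Equiv.Perm (Fin N), φ (fun i => V (σ (Fin.castLE hkN i)))
      - ((N : ℝ) ^ k)⁻¹ * ∑ ι : Fin k → Fin N, φ (fun i => V (ι i))|
      ≤ 2 * (k : ℝ) ^ 2 / N * C := by
  classical
  -- instance search cannot find this one, as it would have to read off `k` from `Fin k ↪ Fin N`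
  have := Equiv.Perm.isMultiplyPretransitive (Fin N) k
  set F : (Fin k → Fin N) → ℝ := fun ι => φ (fun i => V (ι i))
  set inj : Finset (Fin k → Fin N) := univ.image fun ι : Fin k ↪ Fin N => ⇑ι
  have h_perm : ((N.factorial : ℝ))⁻¹ * ∑ σ : Equiv.Perm (Fin N), F (fun i => σ (Fin.castLE hkN i))
      = 𝔼 ι ∈ inj, F ι := by
    rw [expect_image DFunLike.coe_injective.injOn, ← MulAction.expect_smul_eq_expect
        (G := Equiv.Perm (Fin N)) (fun ι : Fin k ↪ Fin N => F ι) (Fin.castLEEmb hkN),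
      Fintype.expect_eq_sum_div_card, Fintype.card_perm, Fintype.card_fin, inv_mul_eq_div]
    rfl
  have h_all : ((N : ℝ) ^ k)⁻¹ * ∑ ι, F ι = 𝔼 ι ∈ univ, F ι := by
    rw [expect_eq_sum_div_card, inv_mul_eq_div]; simp
  have h_card : (#inj : ℝ) / #(univ : Finset (Fin k → Fin N)) = N.descFactorial k / N ^ k := by
    rw [card_image_of_injective _ DFunLike.coe_injective]; simp [Fintype.card_embedding_eq]
  have h_inj_nonempty : inj.Nonempty := (univ_nonempty_iff.2 ⟨Fin.castLEEmb hkN⟩).image _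
  have hC₀ : 0 ≤ C := (abs_nonneg _).trans (hC fun i => V (Fin.castLE hkN i))
  calc _ = |𝔼 ι ∈ inj, F ι - 𝔼 ι ∈ univ, F ι| := by rw [← h_perm, ← h_all]
    _ ≤ 2 * (1 - #inj / #(univ : Finset (Fin k → Fin N))) * C :=
      abs_expect_sub_expect_le (subset_univ _) h_inj_nonempty fun ι _ => hC _
    _ ≤ 2 * (k * (k - 1) / N) * C := by
      rw [h_card]; gcongr; exact Nat.one_sub_descFactorial_div_pow_le hkN
    _ ≤ 2 * ((k : ℝ) ^ 2 / N) * C := by gcongr; nlinarith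
    _ = 2 * (k : ℝ) ^ 2 / N * C := by ring

/-- Grunbaum's combinatorial trick: the symmetrization `φ̃` of
`φ ⊗ 1^{⊗(N-k)}` differs from the "polynomial" function
`R_φ(μ^N_V) = N^{-k} Σ_{i₁,...,i_k} φ(v_{i₁},...,v_{i_k})` by at most
`2k²‖φ‖_∞/N` in supremum norm. -/
theorem grunbaum_symmetrization_estimate
    {E : Type*} [MeasurableSpace E] {k N : ℕ} (hkN : k ≤ N) (hN : 1 ≤ N)
    (φ : (Fin k → E) → ℝ) (hφ : Measurable φ)
    (C : ℝ) (hC : ∀ x, |φ x| ≤ C)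
    (V : Fin N → E) :
    |((N.factorial : ℝ))⁻¹
        * ∑ σ : Equiv.Perm (Fin N), φ (fun i => V (σ (Fin.castLE hkN i)))
      - ((N : ℝ) ^ k)⁻¹ * ∑ ι : Fin k → Fin N, φ (fun i => V (ι i))|
      ≤ 2 * (k : ℝ) ^ 2 / N * C :=
  grunbaum_symmetrization_estimate_general hkN φ C hC V
end

section
/- Let G^N be a symmetric probability measure on E^N (invariant under coordinate permutations) and φ : E^k → ℝ bounded measurable, k ≤ N. Then the integral of φ ⊗ 1^{⊗(N-k)} against G^N equals the integral of its symmetrization φ̃ against G^N, and therefore |⟨G^N, φ ⊗ 1^{⊗(N-k)}⟩ - ⟨G^N, R_φ(μ^N_·)⟩| ≤ (2k²/N)‖φ‖_∞. -/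
open MeasureTheory Finset

/-!
Since any two injective maps `Fin k → Fin N` differ by a permutation of `Fin N`, symmetry of `G`
makes the integral of `V ↦ φ (V ∘ ι)` the same number for every injective `ι`; averaging over
permutations gives the first identity. In the empirical average over all `N ^ k` tuples only the
`N ^ k - N (N - 1) ⋯ (N - k + 1) ≤ k² N ^ (k - 1)` non-injective ones differ from that number,
each by at most `2 C`.
-/

-- `n ^ k - n.descFactorial k ≤ k ^ 2 * n ^ (k - 1)`, multiplied by `n` to avoid subtractions.
theorem Nat.mul_pow_le_mul_descFactorial_add (n k : ℕ) :
    n * n ^ k ≤ n * n.descFactorial k + k ^ 2 * n ^ k := by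
  induction k with
  | zero => simp
  | succ k ih =>
    have hd : n.descFactorial k ≤ n ^ k := n.descFactorial_le_pow k
    rw [Nat.descFactorial_succ]
    rcases le_or_gt k n with hk | hk
    · zify [hk] at ih hd ⊢
      rw [pow_succ]
      nlinarith [mul_le_mul_of_nonneg_left ih (by positivity : (0 : ℤ) ≤ n),
        mul_le_mul_of_nonneg_left hd (by positivity : (0 : ℤ) ≤ n * k),
        (by positivity : (0 : ℤ) ≤ n * n ^ k * k)]
    · rw [Nat.sub_eq_zero_of_le hk.le, zero_mul, mul_zero, zero_add]
      calc n * n ^ (k + 1) ≤ (k + 1) ^ 2 * n ^ (k + 1) := by gcongr; nlinarith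

theorem Fin.card_filter_not_injective (k n : ℕ) :
    #{f : Fin k → Fin n | ¬ Function.Injective f} = n ^ k - n.descFactorial k := by
  have hinj : #{f : Fin k → Fin n | Function.Injective f} = n.descFactorial k := by
    rw [← Fintype.card_subtype, Fintype.card_congr (Equiv.subtypeInjectiveEquivEmbedding _ _),
      Fintype.card_embedding_eq, Fintype.card_fin, Fintype.card_fin]
  have htotal :=
    card_filter_add_card_filter_not (s := univ) fun f : Fin k → Fin n => Function.Injective f
  rw [card_univ, Fintype.card_fun, Fintype.card_fin, Fintype.card_fin, hinj] at htotal
  omega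

theorem Fin.card_filter_not_injective_mul_le (k n : ℕ) :
    #{f : Fin k → Fin n | ¬ Function.Injective f} * n ≤ k ^ 2 * n ^ k := by
  rw [Fin.card_filter_not_injective, Nat.sub_mul, tsub_le_iff_right, mul_comm _ n, mul_comm _ n]
  exact (Nat.mul_pow_le_mul_descFactorial_add n k).trans_eq (add_comm _ _)

theorem abs_sub_inv_pow_mul_sum_le_of_injective_eq {k n : ℕ} (hn : 0 < n) {a D : ℝ}
    {J : (Fin k → Fin n) → ℝ} (hJ_inj : ∀ f, Function.Injective f → J f = a)
    (hJ : ∀ f, |a - J f| ≤ D) :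
    |a - ((n : ℝ) ^ k)⁻¹ * ∑ f, J f| ≤ k ^ 2 / n * D := by
  set s : Finset (Fin k → Fin n) := {f | ¬ Function.Injective f}
  have hD : 0 ≤ D := (abs_nonneg _).trans (hJ fun _ => ⟨0, hn⟩)
  have hnk : (0 : ℝ) < (n : ℝ) ^ k := by positivity
  have hsplit : a - ((n : ℝ) ^ k)⁻¹ * ∑ f, J f = ((n : ℝ) ^ k)⁻¹ * ∑ f ∈ s, (a - J f) := by
    have hs : ∑ f ∈ s, (a - J f) = ∑ f, (a - J f) :=
      sum_filter_of_ne fun f _ hne hinj => hne (by rw [hJ_inj f hinj, sub_self])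
    rw [hs, sum_sub_distrib, sum_const, card_univ, Fintype.card_fun, Fintype.card_fin,
      Fintype.card_fin, nsmul_eq_mul, mul_sub, Nat.cast_pow, inv_mul_cancel_left₀ hnk.ne']
  have hcount : (#s : ℝ) * n ≤ k ^ 2 * (n : ℝ) ^ k := by
    exact_mod_cast Fin.card_filter_not_injective_mul_le k n
  calc |a - ((n : ℝ) ^ k)⁻¹ * ∑ f, J f|
      ≤ ((n : ℝ) ^ k)⁻¹ * ∑ f ∈ s, |a - J f| := by
        rw [hsplit, abs_mul, abs_of_pos (inv_pos.2 hnk)]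
        gcongr
        exact abs_sum_le_sum_abs _ _
    _ ≤ ((n : ℝ) ^ k)⁻¹ * (#s * D) := by
        gcongr
        simpa using sum_le_card_nsmul s _ D fun f _ => hJ f
    _ ≤ k ^ 2 / n * D := by
        rw [← mul_assoc]
        gcongr
        rw [inv_mul_le_iff₀ hnk, ← mul_div_assoc, le_div_iff₀ (by positivity)]
        linarith

section SymmetricMeasure

variable {ι E : Type*} [MeasurableSpace E] {G : Measure (ι → E)}

theorem integral_comp_perm_of_map_eq {σ : Equiv.Perm ι}
    (hσ : Measure.map (fun V : ι → E => fun i => V (σ i)) G = G) {f : (ι → E) → ℝ}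
    (hf : AEStronglyMeasurable f G) :
    ∫ V, f (fun i => V (σ i)) ∂G = ∫ V, f V ∂G := by
  have hmeas : Measurable fun V : ι → E => fun i => V (σ i) := by fun_prop
  rw [← integral_map hmeas.aemeasurable (hσ.symm ▸ hf), hσ]

theorem integral_comp_injective_eq {κ : Type*} [Finite κ]
    (hsym : ∀ σ : Equiv.Perm ι, Measure.map (fun V : ι → E => fun i => V (σ i)) G = G)
    {φ : (κ → E) → ℝ} (hφ : Measurable φ) {a b : κ → ι}
    (ha : Function.Injective a) (hb : Function.Injective b) :
    ∫ V, φ (fun i => V (b i)) ∂G = ∫ V, φ (fun i => V (a i)) ∂G := by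
  obtain ⟨σ, hσ⟩ := Equiv.Perm.exists_extending_pair a b ha hb
  simp_rw [← hσ]
  exact integral_comp_perm_of_map_eq (f := fun V => φ (fun i => V (a i))) (hsym σ)
    (by fun_prop : Measurable _).aestronglyMeasurable

end SymmetricMeasure

/-- For a symmetric probability measure `G^N` on `E^N`, the integral of
`φ ⊗ 1^{⊗(N-k)}` equals the integral of its symmetrization `φ̃`, and
therefore `|⟨G^N, φ ⊗ 1^{⊗(N-k)}⟩ - ⟨G^N, R_φ(μ^N_·)⟩| ≤ 2k²‖φ‖_∞/N`. -/
theorem symmetric_measure_grunbaum_estimate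
    {E : Type*} [MeasurableSpace E] {k N : ℕ} (hkN : k ≤ N) (hN : 1 ≤ N)
    (G : Measure (Fin N → E)) [IsProbabilityMeasure G]
    (hsym : ∀ σ : Equiv.Perm (Fin N),
      Measure.map (fun V : Fin N → E => fun i => V (σ i)) G = G)
    (φ : (Fin k → E) → ℝ) (hφ : Measurable φ)
    (C : ℝ) (hC : ∀ x, |φ x| ≤ C) :
    (∫ V, φ (fun i => V (Fin.castLE hkN i)) ∂G
        = ∫ V, ((N.factorial : ℝ))⁻¹
            * ∑ σ : Equiv.Perm (Fin N), φ (fun i => V (σ (Fin.castLE hkN i))) ∂G)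
    ∧
    |∫ V, φ (fun i => V (Fin.castLE hkN i)) ∂G
        - ∫ V, ((N : ℝ) ^ k)⁻¹ * ∑ ι : Fin k → Fin N, φ (fun i => V (ι i)) ∂G|
      ≤ 2 * (k : ℝ) ^ 2 / N * C := by
  set J : (Fin k → Fin N) → ℝ := fun ι => ∫ V, φ (fun i => V (ι i)) ∂G
  have hmeas (ι : Fin k → Fin N) : Measurable fun V : Fin N → E => φ (fun i => V (ι i)) := by
    fun_prop
  have hint (ι : Fin k → Fin N) : Integrable (fun V : Fin N → E => φ (fun i => V (ι i))) G :=
    .of_bound (hmeas ι).aestronglyMeasurable C (ae_of_all _ fun V => hC _)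
  have hJ_le (ι : Fin k → Fin N) : |J ι| ≤ C := by
    simpa using norm_integral_le_of_norm_le_const (μ := G)
      (ae_of_all _ fun V => (Real.norm_eq_abs _).trans_le (hC fun i => V (ι i)))
  have hJ_inj (ι : Fin k → Fin N) (hι : Function.Injective ι) : J ι = J (Fin.castLE hkN) :=
    integral_comp_injective_eq hsym hφ (Fin.castLE_injective hkN) hι
  constructor
  · rw [integral_const_mul, integral_finsetSum _ fun σ _ => hint _]
    have hperm (σ : Equiv.Perm (Fin N)) :
        ∫ V, φ (fun i => V (σ (Fin.castLE hkN i))) ∂G = J (Fin.castLE hkN) :=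
      hJ_inj _ (σ.injective.comp (Fin.castLE_injective hkN))
    rw [sum_congr rfl fun σ _ => hperm σ, sum_const, card_univ, Fintype.card_perm,
      Fintype.card_fin, nsmul_eq_mul, inv_mul_cancel_left₀ (by positivity)]
  · rw [integral_const_mul, integral_finsetSum _ fun ι _ => hint ι]
    have hbound := abs_sub_inv_pow_mul_sum_le_of_injective_eq hN hJ_inj
      fun ι => (abs_sub _ _).trans (add_le_add (hJ_le _) (hJ_le ι))
    convert hbound using 1
    ring
end

section
/- Normalized relative entropy is superadditive over marginals for symmetric measures: if G ∈ P_sym(E^N) and 1 ≤ j ≤ N, then the j-th marginal satisfies (1/j) H(G_j | γ^{⊗j}) ≤ (1/N) H(G | γ^{⊗N}), where H denotes unnormalized relative entropy. -/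
/-!
Han's inequality for relative entropy. Let `f` be the density of `G` with respect to `γ^{⊗(n+1)}`
and `gᵢ` the density of the marginal obtained by deleting coordinate `i`, i.e. `f` with its
`i`-th variable integrated out. The grid-lines (Loomis–Whitney) inequality gives
`∫ ∏ᵢ gᵢ^{1/n} dγ^{⊗(n+1)} ≤ (∫ f)^{1 + 1/n} = 1`, and Gibbs' variational inequality then yields
`(1/n) ∑ᵢ H(G₋ᵢ) = ∫ log ∏ᵢ gᵢ^{1/n} dG ≤ H(G)`. For symmetric `G` all the `G₋ᵢ` coincide with
`G_n`, so `H(G_n)/n ≤ H(G)/(n+1)`; iterating from `N` down to `j` proves the theorem.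
-/

open MeasureTheory

/-- Relative entropy `H(μ|ν) = ∫ log(dμ/dν) dμ`. -/
noncomputable def Hrel {α : Type*} [MeasurableSpace α] (μ ν : Measure α) : ℝ :=
  ∫ x, Real.log ((μ.rnDeriv ν x).toReal) ∂μ

open Real InformationTheory Finset
open scoped ENNReal

theorem ENNReal.toReal_prod_rpow_pos_and_log_eq {ι : Type*} {s : Finset ι} {a : ι → ℝ≥0∞}
    (ha : ∀ i ∈ s, 0 < (a i).toReal) (p : ℝ) :
    0 < (∏ i ∈ s, a i ^ p).toReal ∧
      Real.log (∏ i ∈ s, a i ^ p).toReal = p * ∑ i ∈ s, Real.log (a i).toReal := by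
  simp only [toReal_prod, ← toReal_rpow]
  refine ⟨prod_pos fun i hi => rpow_pos_of_pos (ha i hi) p, ?_⟩
  rw [log_prod (fun i hi => (rpow_pos_of_pos (ha i hi) p).ne'), mul_sum]
  exact sum_congr rfl fun i hi => Real.log_rpow (ha i hi) p

section Gibbs

variable {α : Type*} [MeasurableSpace α] {μ ν : Measure α}

theorem ae_toReal_pos_and_log_eq_llr [SigmaFinite μ] [μ.HaveLebesgueDecomposition ν]
    (hμν : μ ≪ ν) {g : α → ℝ≥0∞} (hg : μ.rnDeriv ν =ᵐ[ν] g) :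
    ∀ᵐ x ∂μ, 0 < (g x).toReal ∧ log (g x).toReal = llr μ ν x := by
  filter_upwards [hμν.ae_le hg, Measure.rnDeriv_pos hμν,
    hμν.ae_le (Measure.rnDeriv_lt_top μ ν)] with x hx hpos hfin
  rw [hx] at hpos hfin
  exact ⟨ENNReal.toReal_pos hpos.ne' hfin.ne, by rw [llr, hx]⟩

theorem integral_log_le_integral_llr [IsProbabilityMeasure μ] [SigmaFinite ν] (hμν : μ ≪ ν)
    {h : α → ℝ≥0∞} (hh : Measurable h) (hmass : ∫⁻ x, h x ∂ν ≤ 1) (hpos : ∀ᵐ x ∂μ, 0 < (h x).toReal)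
    (hint_h : Integrable (fun x => log (h x).toReal) μ) (hint : Integrable (llr μ ν) μ) :
    ∫ x, log (h x).toReal ∂μ ≤ ∫ x, llr μ ν x ∂μ := by
  set f := μ.rnDeriv ν
  have hf : Measurable f := Measure.measurable_rnDeriv μ ν
  have hq : Measurable fun x => h x / f x := hh.div hf
  have hratio : ∫⁻ x, h x / f x ∂μ ≤ 1 :=
    calc ∫⁻ x, h x / f x ∂μ = ∫⁻ x, f x * (h x / f x) ∂ν := by
          conv_lhs => rw [← Measure.withDensity_rnDeriv_eq μ ν hμν]
          exact lintegral_withDensity_eq_lintegral_mul ν hf hq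
      _ ≤ ∫⁻ x, h x ∂ν := lintegral_mono fun x => ENNReal.mul_div_le
      _ ≤ 1 := hmass
  have hratio_ne_top : ∫⁻ x, h x / f x ∂μ ≠ ∞ := ne_top_of_le_ne_top ENNReal.one_ne_top hratio
  have hratio_int : Integrable (fun x => (h x / f x).toReal) μ :=
    integrable_toReal_of_lintegral_ne_top hq.aemeasurable hratio_ne_top
  have hratio_le : ∫ x, (h x / f x).toReal ∂μ ≤ 1 := by
    rw [integral_toReal hq.aemeasurable (ae_lt_top' hq.aemeasurable hratio_ne_top)]
    exact ENNReal.toReal_le_of_le_ofReal zero_le_one (by simpa using hratio)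
  have hpt : ∀ᵐ x ∂μ, log (h x).toReal - llr μ ν x ≤ (h x / f x).toReal - 1 := by
    filter_upwards [hpos, ae_toReal_pos_and_log_eq_llr hμν (ae_eq_refl f)]
      with x hx ⟨hf0, hllr⟩
    rw [← hllr, ← log_div hx.ne' hf0.ne', ENNReal.toReal_div]
    exact log_le_sub_one_of_pos (div_pos hx hf0)
  suffices ∫ x, log (h x).toReal ∂μ - ∫ x, llr μ ν x ∂μ ≤ 0 by linarith
  calc ∫ x, log (h x).toReal ∂μ - ∫ x, llr μ ν x ∂μ
      = ∫ x, (log (h x).toReal - llr μ ν x) ∂μ := (integral_sub hint_h hint).symm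
    _ ≤ ∫ x, ((h x / f x).toReal - 1) ∂μ :=
        integral_mono_ae (hint_h.sub hint) (hratio_int.sub (integrable_const 1)) hpt
    _ = ∫ x, (h x / f x).toReal ∂μ - 1 := by
        rw [integral_sub hratio_int (integrable_const 1)]; simp
    _ ≤ 0 := by linarith

end Gibbs

/-- The exponent `1 / (#ι - 1)` is the one for which the power of `f` in the grid-lines
inequality `lintegral_mul_prod_lintegral_pow_le` disappears. -/
theorem lintegral_prod_lintegral_update_rpow_le_one {ι : Type*} [Fintype ι] [DecidableEq ι]
    {A : ι → Type*} [∀ i, MeasurableSpace (A i)] (μ : ∀ i, Measure (A i))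
    [∀ i, SigmaFinite (μ i)] (hι : 1 < Fintype.card ι) {f : (∀ i, A i) → ℝ≥0∞}
    (hf : Measurable f) (hf1 : ∫⁻ x, f x ∂Measure.pi μ ≤ 1) :
    ∫⁻ x, ∏ i, (∫⁻ y, f (Function.update x i y) ∂μ i) ^ ((Fintype.card ι : ℝ) - 1)⁻¹
      ∂Measure.pi μ ≤ 1 := by
  have hι' : (Fintype.card ι : ℝ) - 1 ≠ 0 := sub_ne_zero.2 (by exact_mod_cast hι.ne')
  have hp : 0 ≤ ((Fintype.card ι : ℝ) - 1)⁻¹ :=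
    inv_nonneg.2 (sub_nonneg.2 (by exact_mod_cast hι.le))
  have hgrid := lintegral_mul_prod_lintegral_pow_le μ hp (mul_inv_cancel₀ hι').le hf
  rw [mul_inv_cancel₀ hι', sub_self] at hgrid
  simpa using hgrid.trans (ENNReal.rpow_le_one hf1 (by linarith))

section RemoveNth

variable {E : Type*} [MeasurableSpace E] {n : ℕ}

theorem measurable_removeNth (i : Fin (n + 1)) :
    Measurable (Fin.removeNth i : (Fin (n + 1) → E) → Fin n → E) :=
  measurable_pi_lambda _ fun _ => measurable_pi_apply _

theorem measurable_lintegral_insertNth (γ : Measure E) [SFinite γ]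
    {f : (Fin (n + 1) → E) → ℝ≥0∞} (hf : Measurable f) (i : Fin (n + 1)) :
    Measurable fun z => ∫⁻ y, f (i.insertNth y z) ∂γ :=
  ((hf.comp (MeasurableEquiv.piFinSuccAbove (fun _ => E) i).symm.measurable).comp
    measurable_swap).lintegral_prod_right'

theorem map_removeNth_pi (γ : Measure E) [IsProbabilityMeasure γ] (i : Fin (n + 1)) :
    (Measure.pi fun _ : Fin (n + 1) => γ).map (Fin.removeNth i) = Measure.pi fun _ => γ := by
  have hsplit : (Fin.removeNth i : (Fin (n + 1) → E) → Fin n → E)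
      = Prod.snd ∘ MeasurableEquiv.piFinSuccAbove (fun _ => E) i := rfl
  rw [hsplit, ← Measure.map_map measurable_snd (MeasurableEquiv.measurable _),
    (measurePreserving_piFinSuccAbove (fun _ => γ) i).map_eq, Measure.map_snd_prod, measure_univ,
    one_smul]

theorem map_removeNth_withDensity (γ : Measure E) [SigmaFinite γ]
    {f : (Fin (n + 1) → E) → ℝ≥0∞} (hf : Measurable f) (i : Fin (n + 1)) :
    ((Measure.pi fun _ => γ).withDensity f).map (Fin.removeNth i)
      = (Measure.pi fun _ => γ).withDensity fun z => ∫⁻ y, f (i.insertNth y z) ∂γ := by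
  ext s hs
  rw [Measure.map_apply (measurable_removeNth i) hs, withDensity_apply _ hs,
    withDensity_apply _ (measurable_removeNth i hs)]
  set e := MeasurableEquiv.piFinSuccAbove (fun _ => E) i
  have he := (measurePreserving_piFinSuccAbove (fun _ => γ) i).symm e
  have hpre : e.symm ⁻¹' (Fin.removeNth i ⁻¹' s) = Set.univ ×ˢ s := by
    ext ⟨y, z⟩
    simp [e, MeasurableEquiv.piFinSuccAbove_symm_apply, Fin.insertNthEquiv]
  rw [← he.setLIntegral_comp_preimage_emb e.symm.measurableEmbedding, hpre,
    ← Measure.prod_restrict, Measure.restrict_univ]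
  exact lintegral_prod_symm' (fun p => f (e.symm p)) (hf.comp e.symm.measurable)

theorem rnDeriv_map_removeNth (γ : Measure E) [SigmaFinite γ] {G : Measure (Fin (n + 1) → E)}
    [G.HaveLebesgueDecomposition (Measure.pi fun _ => γ)] (hac : G ≪ Measure.pi fun _ => γ)
    (i : Fin (n + 1)) :
    (G.map (Fin.removeNth i)).rnDeriv (Measure.pi fun _ => γ)
      =ᵐ[Measure.pi fun _ => γ]
        fun z => ∫⁻ y, G.rnDeriv (Measure.pi fun _ => γ) (i.insertNth y z) ∂γ := by
  have hf := Measure.measurable_rnDeriv G (Measure.pi fun _ => γ)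
  conv_lhs => rw [← Measure.withDensity_rnDeriv_eq G _ hac, map_removeNth_withDensity γ hf i]
  exact Measure.rnDeriv_withDensity _ (measurable_lintegral_insertNth γ hf i)

theorem absolutelyContinuous_map_removeNth (γ : Measure E) [IsProbabilityMeasure γ]
    {G : Measure (Fin (n + 1) → E)} (hac : G ≪ Measure.pi fun _ => γ) (i : Fin (n + 1)) :
    G.map (Fin.removeNth i) ≪ Measure.pi fun _ => γ := by
  simpa only [map_removeNth_pi] using hac.map (measurable_removeNth i)

theorem integrable_llr_map_removeNth (γ : Measure E) [IsProbabilityMeasure γ]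
    {G : Measure (Fin (n + 1) → E)} [IsFiniteMeasure G] (hac : G ≪ Measure.pi fun _ => γ)
    (hint : Integrable (llr G (Measure.pi fun _ => γ)) G) (i : Fin (n + 1)) :
    Integrable (llr (G.map (Fin.removeNth i)) (Measure.pi fun _ => γ))
      (G.map (Fin.removeNth i)) := by
  simpa only [map_removeNth_pi] using integrable_llr_map hac (measurable_removeNth i) hint

theorem sum_hrel_map_removeNth_le (γ : Measure E) [IsProbabilityMeasure γ] (hn : n ≠ 0)
    (G : Measure (Fin (n + 1) → E)) [IsProbabilityMeasure G]
    (hac : G ≪ Measure.pi fun _ => γ) (hint : Integrable (llr G (Measure.pi fun _ => γ)) G) :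
    ∑ i, Hrel (G.map (Fin.removeNth i)) (Measure.pi fun _ => γ)
      ≤ n * Hrel G (Measure.pi fun _ => γ) := by
  set ν₁ := Measure.pi fun _ : Fin (n + 1) => γ
  set ν₀ := Measure.pi fun _ : Fin n => γ
  set f := G.rnDeriv ν₁
  have hf : Measurable f := Measure.measurable_rnDeriv G ν₁
  set g : Fin (n + 1) → (Fin n → E) → ℝ≥0∞ := fun i z => ∫⁻ y, f (i.insertNth y z) ∂γ
  set Gᵢ : Fin (n + 1) → Measure (Fin n → E) := fun i => G.map (Fin.removeNth i)
  have hdens : ∀ᵐ x ∂G, ∀ i, 0 < (g i (Fin.removeNth i x)).toReal ∧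
      log (g i (Fin.removeNth i x)).toReal = llr (Gᵢ i) ν₀ (Fin.removeNth i x) :=
    ae_all_iff.2 fun i => ae_of_ae_map (measurable_removeNth i).aemeasurable <|
      ae_toReal_pos_and_log_eq_llr (absolutelyContinuous_map_removeNth γ hac i)
        (rnDeriv_map_removeNth γ hac i)
  set p := (n : ℝ)⁻¹
  set h : (Fin (n + 1) → E) → ℝ≥0∞ := fun x => ∏ i, g i (Fin.removeNth i x) ^ p
  have hh : Measurable h := Finset.measurable_prod _ fun i _ =>
    ((measurable_lintegral_insertNth γ hf i).comp (measurable_removeNth i)).pow_const p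
  have hmass : ∫⁻ x, h x ∂ν₁ ≤ 1 := by
    have := lintegral_prod_lintegral_update_rpow_le_one (fun _ => γ) (by simp; omega) hf
      (by rw [Measure.lintegral_rnDeriv hac, measure_univ])
    simpa [h, g, p, Fin.insertNth_removeNth] using this
  have hgeo : ∀ᵐ x ∂G,
      0 < (h x).toReal ∧ log (h x).toReal = p * ∑ i, llr (Gᵢ i) ν₀ (Fin.removeNth i x) := by
    filter_upwards [hdens] with x hx
    rw [← sum_congr rfl fun i _ => (hx i).2]
    exact ENNReal.toReal_prod_rpow_pos_and_log_eq (fun i _ => (hx i).1) p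
  have hlog := hgeo.mono fun x hx => hx.2
  have hint_i : ∀ i, Integrable (fun x => llr (Gᵢ i) ν₀ (Fin.removeNth i x)) G := fun i =>
    (integrable_llr_map_removeNth γ hac hint i).comp_measurable (measurable_removeNth i)
  have hint_h : Integrable (fun x => log (h x).toReal) G :=
    ((integrable_finsetSum _ fun i _ => hint_i i).const_mul p).congr
      (hlog.mono fun x hx => hx.symm)
  have hval : ∫ x, log (h x).toReal ∂G = p * ∑ i, Hrel (Gᵢ i) ν₀ := by
    rw [integral_congr_ae hlog, integral_const_mul, integral_finsetSum _ fun i _ => hint_i i]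
    congr 1
    exact sum_congr rfl fun i _ => (integral_map (measurable_removeNth i).aemeasurable
      (stronglyMeasurable_llr _ _).aestronglyMeasurable).symm
  have hgibbs := integral_log_le_integral_llr hac hh hmass (hgeo.mono fun x hx => hx.1) hint_h hint
  rw [hval] at hgibbs
  have hn' : (0 : ℝ) < n := by positivity
  calc ∑ i, Hrel (Gᵢ i) ν₀ = n * (p * ∑ i, Hrel (Gᵢ i) ν₀) := by
        rw [← mul_assoc, mul_inv_cancel₀ hn'.ne', one_mul]
    _ ≤ n * Hrel G ν₁ := mul_le_mul_of_nonneg_left hgibbs hn'.le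

end RemoveNth

namespace MeasureTheory.Measure

variable {ι ι' E : Type*} [MeasurableSpace E]

def IsSymmetric (G : Measure (ι → E)) : Prop :=
  ∀ σ : Equiv.Perm ι, G.map (fun V : ι → E => fun i => V (σ i)) = G

theorem IsSymmetric.map_comp_embedding_eq [Finite ι] {G : Measure (ι → E)} (hG : G.IsSymmetric)
    (e₁ e₂ : ι' ↪ ι) : G.map (fun V => V ∘ e₁) = G.map (fun V => V ∘ e₂) := by
  classical
  let σ : Equiv.Perm ι := Equiv.extendSubtype
    ((Equiv.ofInjective e₂ e₂.injective).symm.trans (Equiv.ofInjective e₁ e₁.injective))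
  have hσ : ∀ j, σ (e₂ j) = e₁ j := fun j => by
    simp [σ, Equiv.extendSubtype_apply_of_mem _ _ (Set.mem_range_self j)]
  have hcomp : (fun V : ι → E => V ∘ e₁) = (fun V => V ∘ e₂) ∘ fun V i => V (σ i) := by
    ext V j; simp [hσ]
  rw [hcomp, ← Measure.map_map (by fun_prop) (by fun_prop), hG σ]

theorem IsSymmetric.map_comp_embedding [Finite ι] {G : Measure (ι → E)} (hG : G.IsSymmetric)
    (e : ι' ↪ ι) : (G.map fun V => V ∘ e).IsSymmetric := fun σ => by
  rw [Measure.map_map (by fun_prop) (by fun_prop)]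
  exact hG.map_comp_embedding_eq (σ.toEmbedding.trans e) e

theorem IsSymmetric.hrel_map_removeNth_le {n : ℕ} (γ : Measure E) [IsProbabilityMeasure γ]
    (hn : n ≠ 0) {G : Measure (Fin (n + 1) → E)} [IsProbabilityMeasure G] (hG : G.IsSymmetric)
    (hac : G ≪ Measure.pi fun _ => γ) (hint : Integrable (llr G (Measure.pi fun _ => γ)) G)
    (i : Fin (n + 1)) :
    (n + 1) * Hrel (G.map (Fin.removeNth i)) (Measure.pi fun _ => γ)
      ≤ n * Hrel G (Measure.pi fun _ => γ) := by
  have hmarg : ∀ k, G.map (Fin.removeNth k) = G.map (Fin.removeNth i) := fun k =>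
    hG.map_comp_embedding_eq k.succAboveEmb i.succAboveEmb
  simpa [hmarg] using sum_hrel_map_removeNth_le γ hn G hac hint

end MeasureTheory.Measure

/-- Superadditivity of the normalized relative entropy over marginals for
symmetric measures: `(1/j) H(G_j|γ^{⊗j}) ≤ (1/N) H(G|γ^{⊗N})`. -/
theorem normalized_entropy_superadditive
    {E : Type*} [MeasurableSpace E]
    {N j : ℕ} (hj1 : 1 ≤ j) (hjN : j ≤ N)
    (γ : Measure E) [IsProbabilityMeasure γ]
    (G : Measure (Fin N → E)) [IsProbabilityMeasure G]
    (hGsym : ∀ σ : Equiv.Perm (Fin N),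
      Measure.map (fun V : Fin N → E => fun i => V (σ i)) G = G)
    (hGac : G ≪ Measure.pi fun _ : Fin N => γ)
    (hGint : Integrable
      (fun V => Real.log ((G.rnDeriv (Measure.pi fun _ : Fin N => γ) V).toReal)) G) :
    (1 / (j : ℝ)) * Hrel (Measure.map (fun V : Fin N → E => fun i : Fin j =>
        V (Fin.castLE hjN i)) G) (Measure.pi fun _ : Fin j => γ)
      ≤ (1 / (N : ℝ)) * Hrel G (Measure.pi fun _ : Fin N => γ) := by
  change G.IsSymmetric at hGsym
  induction N, hjN using Nat.le_induction with
  | base =>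
    have hid : (fun V : Fin j → E => fun i : Fin j => V (Fin.castLE le_rfl i)) = id := rfl
    rw [hid, Measure.map_id]
  | succ N hjN ih =>
    have hN : N ≠ 0 := by omega
    set G' := G.map (Fin.removeNth (Fin.last N))
    have : IsProbabilityMeasure G' :=
      Measure.isProbabilityMeasure_map (measurable_removeNth _).aemeasurable
    have hmarg : G.map (fun V i => V (Fin.castLE (hjN.trans N.le_succ) i))
        = G'.map (fun V i => V (Fin.castLE hjN i)) := by
      rw [Measure.map_map (by fun_prop) (measurable_removeNth _)]
      congr 1
      ext V i
      simp [Fin.removeNth, Fin.succAbove_last]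
    have hG' := ih G' (absolutelyContinuous_map_removeNth γ hGac _)
      (integrable_llr_map_removeNth γ hGac hGint _)
      (hGsym.map_comp_embedding (Fin.last N).succAboveEmb)
    have hstep := hGsym.hrel_map_removeNth_le γ hN hGac hGint (Fin.last N)
    rw [hmarg]
    refine hG'.trans ?_
    rw [one_div_mul_eq_div, one_div_mul_eq_div, div_le_div_iff₀ (by positivity) (by positivity)]
    push_cast
    linarith
end

section
/- If G^N = f^{⊗N} is a product measure on E^N with E ⊂ ℝ^d and f has finite second moment, and Z ∼ f^{⊗N}, then E[ ‖μ^N_Z - f‖²_{H^{-s}} ] ≤ C_s / N for s > d/2, where C_s depends only on s, d and the second moment of f. -/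
open MeasureTheory
open scoped BigOperators ENNReal RealInnerProductSpace

/-- Characteristic function (Fourier transform) of a measure on `ℝ^d`. -/
noncomputable def charFn {d : ℕ} (μ : Measure (EuclideanSpace ℝ (Fin d)))
    (ξ : EuclideanSpace ℝ (Fin d)) : ℂ :=
  ∫ x, Complex.exp (-Complex.I * (⟪x, ξ⟫ : ℝ)) ∂μ

/-- Squared negative Sobolev distance
`‖μ - ν‖²_{H^{-s}} = ∫ (1+|ξ|²)^{-s} |μ̂(ξ) - ν̂(ξ)|² dξ`. -/
noncomputable def HnegSq {d : ℕ} (s : ℝ)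
    (μ ν : Measure (EuclideanSpace ℝ (Fin d))) : ℝ :=
  ∫ ξ : EuclideanSpace ℝ (Fin d),
    (1 + ‖ξ‖ ^ 2) ^ (-s) * ‖charFn μ ξ - charFn ν ξ‖ ^ 2

/-- The empirical measure `μ^N_V = (1/N) Σᵢ δ_{vᵢ}`. -/
noncomputable def empMeas {E : Type*} [MeasurableSpace E] {N : ℕ}
    (V : Fin N → E) : Measure E :=
  ((N : ℝ≥0∞))⁻¹ • ∑ i, Measure.dirac (V i)

/-! At a fixed frequency `ξ`, `μ̂^N_Z(ξ)` is the empirical mean of the i.i.d. variables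
`exp (-i ⟪Z_i, ξ⟫)`, which have modulus one. Its mean-square deviation from `f̂(ξ)` is therefore
`(Var[cos] + Var[sin]) / N ≤ 2 / N`, by additivity of variance over independent coordinates and
Popoviciu's inequality. Since `s > d / 2`, the weight `(1 + ‖ξ‖²)^(-s)` is integrable, so Fubini
lets us integrate this pointwise bound in `ξ`, giving `C = 2 ∫ (1 + ‖ξ‖²)^(-s) dξ`. -/

open ProbabilityTheory

section EmpiricalMean

variable {E : Type*} [MeasurableSpace E] {μ : Measure E} [IsProbabilityMeasure μ] {N : ℕ}

lemma integral_empiricalMean_pi (hN : N ≠ 0) {u : E → ℝ} (hu : Integrable u μ) :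
    ∫ V, (N : ℝ)⁻¹ * ∑ i, u (V i) ∂(Measure.pi fun _ : Fin N => μ) = ∫ x, u x ∂μ := by
  rw [integral_const_mul, integral_finsetSum _ fun i _ => integrable_comp_eval hu]
  simp [integral_comp_eval (μ := fun _ : Fin N => μ) hu.aestronglyMeasurable, hN]

lemma memLp_empiricalMean_pi {u : E → ℝ} (hu : MemLp u 2 μ) :
    MemLp (fun V => (N : ℝ)⁻¹ * ∑ i, u (V i)) 2 (Measure.pi fun _ : Fin N => μ) :=
  (memLp_finsetSum _ fun i _ => hu.comp_measurePreserving (measurePreserving_eval _ i)).const_mul _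

lemma variance_empiricalMean_pi {u : E → ℝ} (hu : MemLp u 2 μ) :
    Var[fun V => (N : ℝ)⁻¹ * ∑ i, u (V i); Measure.pi fun _ : Fin N => μ] = Var[u; μ] / N := by
  rw [variance_const_mul, ← Finset.sum_fn, variance_sum_pi fun _ => hu]
  rcases eq_or_ne (N : ℝ) 0 with hN | hN
  · simp [hN]
  · simp only [Finset.sum_const, Finset.card_univ, Fintype.card_fin, nsmul_eq_mul]
    field_simp

lemma integral_sq_empiricalMean_sub (hN : N ≠ 0) {u : E → ℝ} (hu : MemLp u 2 μ) :
    ∫ V, ((N : ℝ)⁻¹ * ∑ i, u (V i) - ∫ x, u x ∂μ) ^ 2 ∂(Measure.pi fun _ : Fin N => μ)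
      = Var[u; μ] / N := by
  rw [← variance_empiricalMean_pi hu, variance_eq_integral
    (memLp_empiricalMean_pi hu).aestronglyMeasurable.aemeasurable,
    integral_empiricalMean_pi hN (hu.integrable one_le_two)]

lemma integrable_sq_empiricalMean_sub {u : E → ℝ} (hu : MemLp u 2 μ) (c : ℝ) :
    Integrable (fun V => ((N : ℝ)⁻¹ * ∑ i, u (V i) - c) ^ 2) (Measure.pi fun _ : Fin N => μ) :=
  ((memLp_empiricalMean_pi hu).sub (memLp_const c)).integrable_sq

lemma integral_norm_empiricalMean_sub_sq (hN : N ≠ 0) {g : E → ℂ} (hg : MemLp g 2 μ) :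
    ∫ V, ‖(N : ℝ)⁻¹ • ∑ i, g (V i) - ∫ x, g x ∂μ‖ ^ 2 ∂(Measure.pi fun _ : Fin N => μ)
      = (Var[fun x => (g x).re; μ] + Var[fun x => (g x).im; μ]) / N := by
  have hg_re : MemLp (fun x => (g x).re) 2 μ := hg.re
  have hg_im : MemLp (fun x => (g x).im) 2 μ := hg.im
  have hre : ∫ x, (g x).re ∂μ = (∫ x, g x ∂μ).re := integral_re (hg.integrable one_le_two)
  have him : ∫ x, (g x).im ∂μ = (∫ x, g x ∂μ).im := integral_im (hg.integrable one_le_two)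
  have hsq : ∀ V : Fin N → E, ‖(N : ℝ)⁻¹ • ∑ i, g (V i) - ∫ x, g x ∂μ‖ ^ 2
      = ((N : ℝ)⁻¹ * ∑ i, (g (V i)).re - ∫ x, (g x).re ∂μ) ^ 2
        + ((N : ℝ)⁻¹ * ∑ i, (g (V i)).im - ∫ x, (g x).im ∂μ) ^ 2 := by
    intro V
    rw [Complex.sq_norm, Complex.normSq_apply, hre, him]
    simp [Complex.re_sum, Complex.im_sum, sq]
  simp_rw [hsq]
  rw [integral_add (integrable_sq_empiricalMean_sub hg_re _)
      (integrable_sq_empiricalMean_sub hg_im _),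
    integral_sq_empiricalMean_sub hN hg_re, integral_sq_empiricalMean_sub hN hg_im, add_div]

lemma variance_le_one_of_abs_le_one {u : E → ℝ} (hu : AEMeasurable u μ) (hu_le : ∀ x, |u x| ≤ 1) :
    Var[u; μ] ≤ 1 :=
  (variance_le_sq_of_bounded (ae_of_all μ fun x => abs_le.mp (hu_le x)) hu).trans_eq (by norm_num)

lemma integral_norm_empiricalMean_sub_sq_le (hN : N ≠ 0) {g : E → ℂ}
    (hg : AEStronglyMeasurable g μ) (hg_le : ∀ x, ‖g x‖ ≤ 1) :
    ∫ V, ‖(N : ℝ)⁻¹ • ∑ i, g (V i) - ∫ x, g x ∂μ‖ ^ 2 ∂(Measure.pi fun _ : Fin N => μ)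
      ≤ 2 / N := by
  rw [integral_norm_empiricalMean_sub_sq hN (.of_bound hg 1 (ae_of_all μ hg_le))]
  have hre := variance_le_one_of_abs_le_one (u := fun x => (g x).re)
    (Complex.measurable_re.comp_aemeasurable hg.aemeasurable)
    fun x => (Complex.abs_re_le_norm _).trans (hg_le x)
  have him := variance_le_one_of_abs_le_one (u := fun x => (g x).im)
    (Complex.measurable_im.comp_aemeasurable hg.aemeasurable)
    fun x => (Complex.abs_im_le_norm _).trans (hg_le x)
  gcongr
  linarith

end EmpiricalMean

lemma isProbabilityMeasure_empMeas {E : Type*} [MeasurableSpace E] {N : ℕ} (hN : N ≠ 0)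
    (V : Fin N → E) : IsProbabilityMeasure (empMeas V) := by
  constructor
  simp [empMeas, ENNReal.inv_mul_cancel (Nat.cast_ne_zero.mpr hN) (ENNReal.natCast_ne_top N)]

lemma integrable_one_add_norm_sq_rpow_neg {E : Type*} [NormedAddCommGroup E]
    [InnerProductSpace ℝ E] [FiniteDimensional ℝ E] [MeasurableSpace E] [BorelSpace E]
    (μ : Measure E) [μ.IsAddHaarMeasure] {s : ℝ} (hs : (Module.finrank ℝ E : ℝ) / 2 < s) :
    Integrable (fun ξ : E => (1 + ‖ξ‖ ^ 2) ^ (-s)) μ := by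
  convert integrable_rpow_neg_one_add_norm_sq (μ := μ) (r := 2 * s) (by linarith) using 3
  ring

section Fourier

variable {d : ℕ}

lemma charFn_eq_charFun (μ : Measure (EuclideanSpace ℝ (Fin d))) (ξ : EuclideanSpace ℝ (Fin d)) :
    charFn μ ξ = charFun μ (-ξ) := by
  simp [charFn, charFun_apply, inner_neg_right, mul_comm]

lemma norm_charFn_le_one (μ : Measure (EuclideanSpace ℝ (Fin d))) [IsProbabilityMeasure μ]
    (ξ : EuclideanSpace ℝ (Fin d)) : ‖charFn μ ξ‖ ≤ 1 :=
  charFn_eq_charFun μ ξ ▸ norm_charFun_le_one _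

lemma continuous_charFn (μ : Measure (EuclideanSpace ℝ (Fin d))) [IsFiniteMeasure μ] :
    Continuous (charFn μ) := by
  rw [show charFn μ = fun ξ => charFun μ (-ξ) from funext (charFn_eq_charFun μ)]
  fun_prop

lemma charFn_empMeas {N : ℕ} (V : Fin N → EuclideanSpace ℝ (Fin d))
    (ξ : EuclideanSpace ℝ (Fin d)) :
    charFn (empMeas V) ξ = (N : ℝ)⁻¹ • ∑ i, Complex.exp (-Complex.I * (⟪V i, ξ⟫ : ℝ)) := by
  rw [charFn, empMeas, integral_smul_measure,
    integral_finsetSum_measure fun i _ => integrable_dirac (by simp)]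
  simp

lemma continuous_charFn_empMeas {N : ℕ} :
    Continuous fun p : (Fin N → EuclideanSpace ℝ (Fin d)) × EuclideanSpace ℝ (Fin d) =>
      charFn (empMeas p.1) p.2 := by
  simp_rw [charFn_empMeas]
  fun_prop

lemma integral_norm_charFn_empMeas_sub_sq_le (μ : Measure (EuclideanSpace ℝ (Fin d)))
    [IsProbabilityMeasure μ] {N : ℕ} (hN : N ≠ 0) (ξ : EuclideanSpace ℝ (Fin d)) :
    ∫ V, ‖charFn (empMeas V) ξ - charFn μ ξ‖ ^ 2 ∂(Measure.pi fun _ : Fin N => μ) ≤ 2 / N := by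
  simp_rw [charFn_empMeas]
  rw [charFn]
  exact integral_norm_empiricalMean_sub_sq_le hN
    (g := fun x => Complex.exp (-Complex.I * (⟪x, ξ⟫ : ℝ))) (by fun_prop) fun x => by
      rw [Complex.norm_exp]; simp

end Fourier

section Sobolev

variable {d : ℕ} {s : ℝ} (μ : Measure (EuclideanSpace ℝ (Fin d))) [IsProbabilityMeasure μ]
  {N : ℕ}

lemma integral_HnegSq_empMeas (hs : (d : ℝ) / 2 < s) (hN : N ≠ 0) :
    ∫ V, HnegSq s (empMeas V) μ ∂(Measure.pi fun _ : Fin N => μ)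
      = ∫ ξ, (1 + ‖ξ‖ ^ 2) ^ (-s) *
          ∫ V, ‖charFn (empMeas V) ξ - charFn μ ξ‖ ^ 2 ∂(Measure.pi fun _ : Fin N => μ) := by
  set P := Measure.pi fun _ : Fin N => μ
  have hint : Integrable (Function.uncurry fun V ξ =>
      (1 + ‖ξ‖ ^ 2) ^ (-s) * ‖charFn (empMeas V) ξ - charFn μ ξ‖ ^ 2) (P.prod volume) := by
    refine (((integrable_one_add_norm_sq_rpow_neg volume (by simpa using hs)).comp_snd P).const_mul
      4).mono' ?_ (ae_of_all _ ?_)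
    · have hw_cont : Continuous fun ξ : EuclideanSpace ℝ (Fin d) => (1 + ‖ξ‖ ^ 2) ^ (-s) :=
        .rpow_const (by fun_prop) fun ξ => .inl (by positivity)
      exact ((hw_cont.comp continuous_snd).mul ((continuous_charFn_empMeas.sub
        ((continuous_charFn μ).comp continuous_snd)).norm.pow 2)).aestronglyMeasurable
    · rintro ⟨V, ξ⟩
      have := isProbabilityMeasure_empMeas hN V
      have hD : ‖charFn (empMeas V) ξ - charFn μ ξ‖ ≤ 2 := (norm_sub_le _ _).trans
        (by linarith [norm_charFn_le_one (empMeas V) ξ, norm_charFn_le_one μ ξ])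
      have hw_nonneg : 0 ≤ (1 + ‖ξ‖ ^ 2) ^ (-s) := by positivity
      simp only [Function.uncurry_apply_pair, norm_mul, Real.norm_of_nonneg hw_nonneg, norm_pow,
        norm_norm]
      have hD2 := pow_le_pow_left₀ (norm_nonneg _) hD 2
      linarith [mul_le_mul_of_nonneg_left hD2 hw_nonneg]
  simp_rw [HnegSq, ← integral_const_mul]
  exact integral_integral_swap hint

lemma integral_HnegSq_empMeas_le (hs : (d : ℝ) / 2 < s) (hN : N ≠ 0) :
    ∫ V, HnegSq s (empMeas V) μ ∂(Measure.pi fun _ : Fin N => μ)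
      ≤ 2 * (∫ ξ : EuclideanSpace ℝ (Fin d), (1 + ‖ξ‖ ^ 2) ^ (-s)) / N := by
  rw [integral_HnegSq_empMeas μ hs hN]
  calc _ ≤ ∫ ξ : EuclideanSpace ℝ (Fin d), (1 + ‖ξ‖ ^ 2) ^ (-s) * (2 / N) := by
        refine integral_mono_of_nonneg (ae_of_all _ fun ξ => by positivity)
          ((integrable_one_add_norm_sq_rpow_neg volume (by simpa using hs)).mul_const _)
          (ae_of_all _ fun ξ => ?_)
        exact mul_le_mul_of_nonneg_left (integral_norm_charFn_empMeas_sub_sq_le μ hN ξ)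
          (by positivity)
    _ = _ := by rw [integral_mul_const]; ring

end Sobolev

theorem empirical_Hneg_LLN_iid_general {d : ℕ} (s : ℝ) (hs : (d : ℝ) / 2 < s)
    (f : Measure (EuclideanSpace ℝ (Fin d))) [IsProbabilityMeasure f] :
    ∃ C : ℝ, 0 < C ∧ ∀ N : ℕ, 1 ≤ N →
      (∫ V, HnegSq s (empMeas V) f ∂(Measure.pi fun _ : Fin N => f)) ≤ C / N := by
  have hw := integrable_one_add_norm_sq_rpow_neg (volume : Measure (EuclideanSpace ℝ (Fin d)))
    (by simpa using hs)
  have hw_pos : 0 < ∫ ξ : EuclideanSpace ℝ (Fin d), (1 + ‖ξ‖ ^ 2) ^ (-s) := by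
    refine (integral_pos_iff_support_of_nonneg (fun ξ => by positivity) hw).2 ?_
    rw [Function.support_eq_univ fun ξ => (Real.rpow_pos_of_pos (by positivity) _).ne']
    exact Measure.measure_univ_pos.mpr (NeZero.ne _)
  exact ⟨_, by positivity, fun N hN => integral_HnegSq_empMeas_le f hs (by omega)⟩

/-- Law of large numbers in `H^{-s}`, `s > d/2`: for i.i.d. samples from `f`,
`E[‖μ^N_Z - f‖²_{H^{-s}}] ≤ C_s / N` with `C_s` depending only on `s`, `d` and
the second moment of `f`. -/
theorem empirical_Hneg_LLN_iid {d : ℕ} (s : ℝ) (hs : (d : ℝ) / 2 < s)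
    (f : Measure (EuclideanSpace ℝ (Fin d))) [IsProbabilityMeasure f]
    (hmom : Integrable (fun x => ‖x‖ ^ 2) f) :
    ∃ C : ℝ, 0 < C ∧ ∀ N : ℕ, 1 ≤ N →
      (∫ V, HnegSq s (empMeas V) f ∂(Measure.pi fun _ : Fin N => f)) ≤ C / N :=
  empirical_Hneg_LLN_iid_general s hs f
end

section
/- More generally, for a symmetric probability measure G^N on (ℝ^d)^N and f ∈ P(ℝ^d), with Z ∼ G^N, the expected squared H^{-s} distance of the empirical measure to f is controlled by the two-particle marginal: E[‖μ^N_Z - f‖²_{H^{-s}}] ≤ C_s ( ‖G^N_2 - f^{⊗2}‖_{TV or weak dual norm} ) + C_s / N, for s > d/2, where the first term is ∫∫ K_s(x-y) d(G^N_2 - f⊗f) with K_s the kernel of (1+|ξ|²)^{-s} plus cross terms, each bounded by a fixed smooth test function paired against G^N_2 - f^{⊗2}. -/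
open MeasureTheory
open scoped BigOperators ENNReal RealInnerProductSpace

/-- Total variation distance between two measures. -/
noncomputable def tvDist {α : Type*} [MeasurableSpace α] (μ ν : Measure α) : ℝ :=
  sSup { r | ∃ A : Set α, MeasurableSet A ∧ r = |(μ A).toReal - (ν A).toReal| }

/-!
Write `g_x(ξ) = e^{i⟨x, ξ⟩} - f̂(ξ)`. The Fourier transform of `μ^N_V - f` is `N⁻¹ Σᵢ g_{Vᵢ}`, so
`‖μ^N_V - f‖²_{H^{-s}} = N⁻² Σᵢⱼ K(Vᵢ, Vⱼ)` with `K(x, y) = ∫ (1 + |ξ|²)^{-s} ⟪g_x(ξ), g_y(ξ)⟫ dξ`.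
For `s > d/2` the weight is integrable, so `K` is bounded and continuous, and `∫ K d(f ⊗ f) = 0`
since `g_x(ξ)` has `f`-mean zero in `x`. In expectation the `N` diagonal terms contribute
`O(1/N)`, while by exchangeability each off-diagonal term equals `∫ K d(G₂ - f ⊗ f)`, which a Hahn
decomposition bounds by `2 sup |K| · TV(G₂, f ⊗ f)`.
-/

section TotalVariation

variable {α : Type*} [MeasurableSpace α] {μ ν : Measure α} [IsFiniteMeasure μ] [IsFiniteMeasure ν]

lemma abs_sub_le_tvDist {A : Set α} (hA : MeasurableSet A) :
    |μ.real A - ν.real A| ≤ tvDist μ ν := by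
  refine le_csSup ⟨μ.real Set.univ + ν.real Set.univ, ?_⟩ ⟨A, hA, rfl⟩
  rintro r ⟨B, -, rfl⟩
  show |μ.real B - ν.real B| ≤ _
  have hμ : μ.real B ≤ μ.real Set.univ := measureReal_mono (Set.subset_univ B)
  have hν : ν.real B ≤ ν.real Set.univ := measureReal_mono (Set.subset_univ B)
  rw [abs_sub_le_iff]
  constructor <;> linarith [measureReal_nonneg (μ := μ) (s := B),
    measureReal_nonneg (μ := ν) (s := B)]

lemma tvDist_nonneg : 0 ≤ tvDist μ ν :=
  (abs_nonneg _).trans (abs_sub_le_tvDist MeasurableSet.empty)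

lemma abs_integral_sub_integral_le_of_le (hνμ : ν ≤ μ) {h : α → ℝ}
    (hh : AEStronglyMeasurable h μ) {B : ℝ} (hB : ∀ x, |h x| ≤ B) :
    |∫ x, h x ∂μ - ∫ x, h x ∂ν| ≤ B * (μ.real Set.univ - ν.real Set.univ) := by
  have hint : Integrable h μ := Integrable.of_bound hh B (ae_of_all _ hB)
  have hdecomp : μ - ν + ν = μ := Measure.sub_add_cancel_of_le hνμ
  have hsub : ∫ x, h x ∂μ - ∫ x, h x ∂ν = ∫ x, h x ∂(μ - ν) := by
    conv_lhs => rw [← hdecomp]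
    rw [integral_add_measure (hint.mono_measure Measure.sub_le) (hint.mono_measure hνμ),
      add_sub_cancel_right]
  have hmass : (μ - ν).real Set.univ = μ.real Set.univ - ν.real Set.univ := by
    rw [measureReal_def, Measure.sub_apply MeasurableSet.univ hνμ,
      ENNReal.toReal_sub_of_le (hνμ Set.univ) (measure_ne_top _ _)]
    rfl
  rw [hsub, ← hmass, ← Real.norm_eq_abs]
  exact norm_integral_le_of_norm_le_const (ae_of_all _ hB)

lemma abs_integral_sub_integral_le_two_mul_tvDist {h : α → ℝ}
    (hμ : AEStronglyMeasurable h μ) (hν : AEStronglyMeasurable h ν) {B : ℝ} (hB0 : 0 ≤ B)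
    (hB : ∀ x, |h x| ≤ B) :
    |∫ x, h x ∂μ - ∫ x, h x ∂ν| ≤ 2 * B * tvDist μ ν := by
  obtain ⟨S, hS⟩ := exists_isHahnDecomposition ν μ
  have hS_le := abs_integral_sub_integral_le_of_le hS.le_on hμ.restrict hB
  have hSc_le := abs_integral_sub_integral_le_of_le hS.ge_on_compl hν.restrict hB
  simp only [measureReal_restrict_apply_univ] at hS_le hSc_le
  have htvS := abs_sub_le_tvDist (μ := μ) (ν := ν) hS.measurableSet
  have htvSc := abs_sub_le_tvDist (μ := μ) (ν := ν) hS.measurableSet.compl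
  rw [abs_sub_comm] at htvSc
  have hsplit : ∫ x, h x ∂μ - ∫ x, h x ∂ν
      = (∫ x in S, h x ∂μ - ∫ x in S, h x ∂ν) - (∫ x in Sᶜ, h x ∂ν - ∫ x in Sᶜ, h x ∂μ) := by
    rw [← integral_add_compl hS.measurableSet (Integrable.of_bound hμ B (ae_of_all _ hB)),
      ← integral_add_compl hS.measurableSet (Integrable.of_bound hν B (ae_of_all _ hB))]
    ring
  calc |∫ x, h x ∂μ - ∫ x, h x ∂ν|
      ≤ |∫ x in S, h x ∂μ - ∫ x in S, h x ∂ν| + |∫ x in Sᶜ, h x ∂ν - ∫ x in Sᶜ, h x ∂μ| :=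
        hsplit ▸ abs_sub _ _
    _ ≤ B * tvDist μ ν + B * tvDist μ ν := by
        gcongr
        · exact hS_le.trans (mul_le_mul_of_nonneg_left ((le_abs_self _).trans htvS) hB0)
        · exact hSc_le.trans (mul_le_mul_of_nonneg_left ((le_abs_self _).trans htvSc) hB0)
    _ = 2 * B * tvDist μ ν := by ring

end TotalVariation

lemma norm_sum_sq_eq_sum_sum_inner {F ι : Type*} [NormedAddCommGroup F] [InnerProductSpace ℝ F]
    (s : Finset ι) (a : ι → F) :
    ‖∑ i ∈ s, a i‖ ^ 2 = ∑ i ∈ s, ∑ j ∈ s, ⟪a i, a j⟫ := by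
  rw [← real_inner_self_eq_norm_sq, sum_inner]
  simp_rw [inner_sum]

section CenteredKernel

open Complex

variable {E : Type*} [NormedAddCommGroup E] [InnerProductSpace ℝ E] [MeasureSpace E]
  (f : Measure E)

noncomputable def centeredChar (x ξ : E) : ℂ := exp (⟪x, ξ⟫ * I) - charFun f ξ

/-- For `w = (1 + ‖ξ‖²)^{-s}` this is, up to the Fourier normalisation,
`K_s(x - y) - (K_s * f)(x) - (K_s * f)(y) + ∬ K_s df df`. The inner product is the real one on `ℂ`,
`⟪a, b⟫ = Re (conj a * b)`. -/
noncomputable def centeredKernel (w : E → ℝ) (x y : E) : ℝ :=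
  ∫ ξ, w ξ * ⟪centeredChar f x ξ, centeredChar f y ξ⟫

lemma norm_centeredChar_le [IsProbabilityMeasure f] (x ξ : E) : ‖centeredChar f x ξ‖ ≤ 2 :=
  (norm_sub_le _ _).trans <| by
    rw [norm_exp_ofReal_mul_I]; linarith [norm_charFun_le_one (μ := f) ξ]

lemma abs_mul_inner_centeredChar_le [IsProbabilityMeasure f] (w : E → ℝ) (x y ξ : E) :
    |w ξ * ⟪centeredChar f x ξ, centeredChar f y ξ⟫| ≤ 4 * |w ξ| := by
  rw [abs_mul, mul_comm]
  gcongr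
  calc |⟪centeredChar f x ξ, centeredChar f y ξ⟫|
      ≤ ‖centeredChar f x ξ‖ * ‖centeredChar f y ξ‖ := abs_real_inner_le_norm _ _
    _ ≤ 2 * 2 := by gcongr <;> exact norm_centeredChar_le f _ _
    _ = 4 := by norm_num

lemma abs_centeredKernel_le [IsProbabilityMeasure f] {w : E → ℝ} (hw : Integrable w) (x y : E) :
    |centeredKernel f w x y| ≤ 4 * ∫ ξ, |w ξ| := by
  rw [← integral_const_mul, ← Real.norm_eq_abs]
  exact norm_integral_le_of_norm_le (hw.abs.const_mul 4)
    (ae_of_all _ (abs_mul_inner_centeredChar_le f w x y))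

lemma integral_centeredKernel_le [IsProbabilityMeasure f] {w : E → ℝ} (hw : Integrable w)
    {X : Type*} [MeasurableSpace X] (P : Measure X) [IsProbabilityMeasure P] (u v : X → E) :
    ∫ x, centeredKernel f w (u x) (v x) ∂P ≤ 4 * ∫ ξ, |w ξ| :=
  (le_abs_self _).trans <| by
    simpa using norm_integral_le_of_norm_le_const (μ := P)
      (f := fun x => centeredKernel f w (u x) (v x))
      (ae_of_all _ fun x => abs_centeredKernel_le f hw (u x) (v x))

variable [BorelSpace E]

lemma integral_centeredChar [IsProbabilityMeasure f] (ξ : E) :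
    ∫ x, centeredChar f x ξ ∂f = 0 := by
  unfold centeredChar
  rw [integral_sub _ (integrable_const _), integral_const, ← charFun_apply]
  · simp
  · exact Integrable.of_bound (by fun_prop) 1 (ae_of_all _ fun x => (norm_exp_ofReal_mul_I _).le)

variable [SecondCountableTopology E]

lemma continuous_centeredChar [IsFiniteMeasure f] :
    Continuous fun p : E × E => centeredChar f p.1 p.2 := by
  unfold centeredChar; fun_prop

variable [IsProbabilityMeasure f] {w : E → ℝ}

lemma integrable_mul_inner_centeredChar (hw : Integrable w) (x y : E) :
    Integrable fun ξ => w ξ * ⟪centeredChar f x ξ, centeredChar f y ξ⟫ := by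
  have hcont : Continuous fun ξ => ⟪centeredChar f x ξ, centeredChar f y ξ⟫ :=
    ((continuous_centeredChar f).comp (Continuous.prodMk_right x)).inner
      ((continuous_centeredChar f).comp (Continuous.prodMk_right y))
  refine (hw.abs.const_mul 4).mono' (hw.1.mul hcont.aestronglyMeasurable) (ae_of_all _ fun ξ => ?_)
  exact abs_mul_inner_centeredChar_le f w x y ξ

lemma continuous_centeredKernel (hw : Integrable w) :
    Continuous fun p : E × E => centeredKernel f w p.1 p.2 := by
  refine continuous_of_dominated (fun p => (integrable_mul_inner_centeredChar f hw p.1 p.2).1)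
    (fun p => ae_of_all _ (abs_mul_inner_centeredChar_le f w p.1 p.2))
    (hw.abs.const_mul 4) (ae_of_all _ fun ξ => ?_)
  exact continuous_const.mul
    (((continuous_centeredChar f).comp (continuous_fst.prodMk continuous_const)).inner
      ((continuous_centeredChar f).comp (continuous_snd.prodMk continuous_const)))

lemma integral_centeredKernel_right [SFinite (volume : Measure E)] (hw : Integrable w) (x : E) :
    ∫ y, centeredKernel f w x y ∂f = 0 := by
  have hcont : Continuous fun p : E × E => ⟪centeredChar f x p.2, centeredChar f p.1 p.2⟫ :=
    ((continuous_centeredChar f).comp (continuous_const.prodMk continuous_snd)).inner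
      (continuous_centeredChar f)
  have hint : Integrable (fun p : E × E => w p.2 * ⟪centeredChar f x p.2, centeredChar f p.1 p.2⟫)
      (f.prod volume) :=
    ((hw.abs.const_mul 4).comp_snd f).mono' ((hw.comp_snd f).1.mul hcont.aestronglyMeasurable)
      (ae_of_all _ fun p => abs_mul_inner_centeredChar_le f w x p.1 p.2)
  unfold centeredKernel
  rw [integral_integral_swap hint]
  refine integral_eq_zero_of_ae (ae_of_all _ fun ξ => ?_)
  have hchar : Integrable (fun y => centeredChar f y ξ) f :=
    Integrable.of_bound ((continuous_centeredChar f).comp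
      (continuous_id.prodMk continuous_const)).aestronglyMeasurable 2
      (ae_of_all _ fun y => norm_centeredChar_le f y ξ)
  dsimp only [Pi.zero_apply]
  rw [integral_const_mul, integral_inner hchar, integral_centeredChar, inner_zero_right, mul_zero]

lemma integral_centeredKernel_prod [SFinite (volume : Measure E)] (hw : Integrable w) :
    ∫ p, centeredKernel f w p.1 p.2 ∂(f.prod f) = 0 := by
  rw [integral_prod _ (Integrable.of_bound (continuous_centeredKernel f hw).aestronglyMeasurable
    _ (ae_of_all _ fun p => (abs_centeredKernel_le f hw p.1 p.2)))]
  simp [integral_centeredKernel_right f hw]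

end CenteredKernel

section EmpiricalMeasure

open Complex

variable {E : Type*} [NormedAddCommGroup E] [InnerProductSpace ℝ E] [MeasureSpace E]
  [BorelSpace E] {N : ℕ}

lemma charFun_empMeas (V : Fin N → E) (ξ : E) :
    charFun (empMeas V) ξ = (N : ℝ)⁻¹ • ∑ i, exp (⟪V i, ξ⟫ * I) := by
  rw [empMeas, charFun_apply, integral_smul_measure,
    integral_finsetSum_measure fun i _ => integrable_dirac enorm_lt_top]
  simp

lemma charFun_empMeas_sub (f : Measure E) (hN : N ≠ 0) (V : Fin N → E) (ξ : E) :
    charFun (empMeas V) ξ - charFun f ξ = (N : ℝ)⁻¹ • ∑ i, centeredChar f (V i) ξ := by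
  simp only [centeredChar, Finset.sum_sub_distrib, Finset.sum_const, Finset.card_univ,
    Fintype.card_fin, smul_sub, charFun_empMeas, ← Nat.cast_smul_eq_nsmul ℝ, smul_smul,
    inv_mul_cancel₀ (Nat.cast_ne_zero.mpr hN : (N : ℝ) ≠ 0), one_smul]

noncomputable def charFunDistSq (w : E → ℝ) (μ ν : Measure E) : ℝ :=
  ∫ ξ, w ξ * ‖charFun μ ξ - charFun ν ξ‖ ^ 2

variable [SecondCountableTopology E] (f : Measure E) [IsProbabilityMeasure f] {w : E → ℝ}

lemma charFunDistSq_empMeas (hw : Integrable w) (hN : N ≠ 0) (V : Fin N → E) :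
    charFunDistSq w (empMeas V) f = ((N : ℝ)⁻¹) ^ 2 * ∑ i, ∑ j, centeredKernel f w (V i) (V j) := by
  have hpt : ∀ ξ, w ξ * ‖charFun (empMeas V) ξ - charFun f ξ‖ ^ 2 = ((N : ℝ)⁻¹) ^ 2 *
      ∑ i, ∑ j, w ξ * ⟪centeredChar f (V i) ξ, centeredChar f (V j) ξ⟫ := fun ξ => by
    rw [charFun_empMeas_sub f hN, norm_smul, mul_pow, norm_sum_sq_eq_sum_sum_inner,
      Real.norm_of_nonneg (by positivity), Finset.mul_sum]
    simp_rw [Finset.mul_sum]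
    ring_nf
  simp_rw [charFunDistSq, hpt, integral_const_mul, centeredKernel]
  rw [integral_finsetSum _ fun i _ =>
    integrable_finsetSum _ fun j _ => integrable_mul_inner_centeredChar f hw _ _]
  simp_rw [integral_finsetSum _ fun j _ => integrable_mul_inner_centeredChar f hw _ _]

lemma integral_charFunDistSq_empMeas (hw : Integrable w) (hN : N ≠ 0)
    (G : Measure (Fin N → E)) [IsFiniteMeasure G] :
    ∫ V, charFunDistSq w (empMeas V) f ∂G
      = ((N : ℝ)⁻¹) ^ 2 * ∑ i, ∑ j, ∫ V, centeredKernel f w (V i) (V j) ∂G := by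
  have hint : ∀ i j, Integrable (fun V : Fin N → E => centeredKernel f w (V i) (V j)) G := by
    intro i j
    have hc := (continuous_centeredKernel f hw).comp
      (show Continuous fun V : Fin N → E => (V i, V j) by fun_prop)
    exact Integrable.of_bound hc.aestronglyMeasurable _
      (ae_of_all _ fun V => abs_centeredKernel_le f hw (V i) (V j))
  simp_rw [charFunDistSq_empMeas f hw hN, integral_const_mul]
  rw [integral_finsetSum _ fun i _ => integrable_finsetSum _ fun j _ => hint i j]
  simp_rw [integral_finsetSum _ fun j _ => hint _ j]

lemma integral_centeredKernel_le_tvDist [SFinite (volume : Measure E)] (hw : Integrable w)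
    (P : Measure (E × E)) [IsFiniteMeasure P] :
    ∫ p, centeredKernel f w p.1 p.2 ∂P ≤ 8 * (∫ ξ, |w ξ|) * tvDist P (f.prod f) := by
  have hw0 : 0 ≤ 4 * ∫ ξ, |w ξ| := by positivity
  have hK := continuous_centeredKernel f hw
  have := abs_integral_sub_integral_le_two_mul_tvDist (μ := P) (ν := f.prod f)
    hK.aestronglyMeasurable hK.aestronglyMeasurable hw0 fun p => abs_centeredKernel_le f hw p.1 p.2
  rw [integral_centeredKernel_prod f hw, sub_zero] at this
  linarith [le_abs_self (∫ p, centeredKernel f w p.1 p.2 ∂P)]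

end EmpiricalMeasure

lemma map_pair_eq_of_map_perm_eq {X : Type*} [MeasurableSpace X] {N : ℕ}
    {G : Measure (Fin N → X)} (hG : ∀ σ : Equiv.Perm (Fin N), G.map (fun V i => V (σ i)) = G)
    {i j k l : Fin N} (hij : i ≠ j) (hkl : k ≠ l) :
    G.map (fun V => (V i, V j)) = G.map (fun V => (V k, V l)) := by
  obtain ⟨σ, hσk, hσl⟩ :=
    MulAction.is_two_pretransitive_iff.mp (Equiv.Perm.isMultiplyPretransitive (Fin N) 2) hkl hij
  subst hσk hσl
  conv_rhs => rw [← hG σ, Measure.map_map (by fun_prop) (by fun_prop)]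
  rfl

lemma sum_sum_le_card_mul_add_card_sq_mul {ι : Type*} [Fintype ι] {a : ι → ι → ℝ} {D T : ℝ}
    (hT : 0 ≤ T) (hdiag : ∀ i, a i i ≤ D) (hoff : ∀ i j, i ≠ j → a i j ≤ T) :
    ∑ i, ∑ j, a i j ≤ Fintype.card ι * D + Fintype.card ι ^ 2 * T := by
  classical
  calc ∑ i, ∑ j, a i j ≤ ∑ i, ∑ j, (T + if i = j then D else 0) := by
        refine Finset.sum_le_sum fun i _ => Finset.sum_le_sum fun j _ => ?_
        by_cases hij : i = j
        · subst hij; simpa using (hdiag i).trans (le_add_of_nonneg_left hT)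
        · simpa [hij] using hoff i j hij
    _ = Fintype.card ι * D + Fintype.card ι ^ 2 * T := by
        simp [Finset.sum_add_distrib]; ring

section Sobolev

open Complex ComplexConjugate

variable {E : Type*} [NormedAddCommGroup E] [InnerProductSpace ℝ E]

noncomputable def sobolevWeight (s : ℝ) (ξ : E) : ℝ := (1 + ‖ξ‖ ^ 2) ^ (-s)

lemma integrable_sobolevWeight [FiniteDimensional ℝ E] [MeasureSpace E] [BorelSpace E]
    [(volume : Measure E).IsAddHaarMeasure] {s : ℝ} (hs : (Module.finrank ℝ E : ℝ) < 2 * s) :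
    Integrable (sobolevWeight (E := E) s) := by
  have := integrable_rpow_neg_one_add_norm_sq (μ := (volume : Measure E)) hs
  rwa [neg_div, mul_div_cancel_left₀ _ two_ne_zero] at this

lemma charFn_eq_conj_charFun {d : ℕ} (μ : Measure (EuclideanSpace ℝ (Fin d)))
    (ξ : EuclideanSpace ℝ (Fin d)) : charFn μ ξ = conj (charFun μ ξ) := by
  rw [charFn, charFun_apply, ← integral_conj]
  congr 1 with x
  rw [← Complex.exp_conj]
  simp [mul_comm]

lemma HnegSq_eq_charFunDistSq {d : ℕ} (s : ℝ) (μ ν : Measure (EuclideanSpace ℝ (Fin d))) :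
    HnegSq s μ ν = charFunDistSq (sobolevWeight s) μ ν := by
  simp_rw [HnegSq, charFn_eq_conj_charFun, ← map_sub, Complex.norm_conj]
  rfl

end Sobolev

/-- For a symmetric probability measure `G^N` on `(ℝ^d)^N`, the expected
squared `H^{-s}` distance (`s > d/2`) of the empirical measure to `f` is
controlled by the two-particle marginal:
`E[‖μ^N_Z - f‖²_{H^{-s}}] ≤ C_s ‖G^N_2 - f^{⊗2}‖ + C_s/N`. -/
theorem empirical_Hneg_controlled_by_second_marginal
    {d : ℕ} (s : ℝ) (hs : (d : ℝ) / 2 < s)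
    (f : Measure (EuclideanSpace ℝ (Fin d))) [IsProbabilityMeasure f] :
    ∃ C : ℝ, 0 < C ∧ ∀ N : ℕ, (hN : 2 ≤ N) →
      ∀ G : Measure (Fin N → EuclideanSpace ℝ (Fin d)),
        IsProbabilityMeasure G →
        (∀ σ : Equiv.Perm (Fin N),
          Measure.map (fun V : Fin N → EuclideanSpace ℝ (Fin d) =>
            fun i => V (σ i)) G = G) →
        (∫ V, HnegSq s (empMeas V) f ∂G)
          ≤ C * tvDist
              (Measure.map (fun V : Fin N → EuclideanSpace ℝ (Fin d) =>
                (V ⟨0, by omega⟩, V ⟨1, by omega⟩)) G)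
              (f.prod f)
            + C / N := by
  have hw : Integrable (sobolevWeight (E := EuclideanSpace ℝ (Fin d)) s) :=
    integrable_sobolevWeight (by rw [finrank_euclideanSpace_fin]; linarith)
  set M := ∫ ξ, |sobolevWeight (E := EuclideanSpace ℝ (Fin d)) s ξ|
  have hM : 0 ≤ M := integral_nonneg fun _ => abs_nonneg _
  refine ⟨8 * M + 4, by positivity, fun N hN G hG hsym => ?_⟩
  set tv := tvDist (G.map fun V => (V ⟨0, by omega⟩, V ⟨1, by omega⟩)) (f.prod f)
  have htv : 0 ≤ tv := tvDist_nonneg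
  have hdiag : ∀ i, ∫ V, centeredKernel f (sobolevWeight s) (V i) (V i) ∂G ≤ 4 * M :=
    fun i => integral_centeredKernel_le f hw G _ _
  have hoff : ∀ i j, i ≠ j →
      ∫ V, centeredKernel f (sobolevWeight s) (V i) (V j) ∂G ≤ 8 * M * tv := by
    intro i j hij
    have hK := continuous_centeredKernel f hw
    rw [← integral_map (φ := fun V : Fin N → _ => (V i, V j)) (by fun_prop)
      hK.aestronglyMeasurable, map_pair_eq_of_map_perm_eq hsym hij
      (show (⟨0, by omega⟩ : Fin N) ≠ ⟨1, by omega⟩ by simp)]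
    exact integral_centeredKernel_le_tvDist f hw _
  simp_rw [HnegSq_eq_charFunDistSq]
  rw [integral_charFunDistSq_empMeas f hw (by omega)]
  calc ((N : ℝ)⁻¹) ^ 2 * ∑ i, ∑ j, ∫ V, centeredKernel f (sobolevWeight s) (V i) (V j) ∂G
      ≤ ((N : ℝ)⁻¹) ^ 2 * (N * (4 * M) + N ^ 2 * (8 * M * tv)) := by
        gcongr
        simpa using sum_sum_le_card_mul_add_card_sq_mul (by positivity) hdiag hoff
    _ = 8 * M * tv + 4 * M / N := by field_simp; ring
    _ ≤ (8 * M + 4) * tv + (8 * M + 4) / N := by gcongr <;> linarith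
end
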